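/- Let I be an interval, Λ ⊆ ℝ² open, and Φ = (Φ₁, Φ₂) : I × Λ → ℍ a C¹ diffeomorphism onto Ω ⊆ ℍ such that every curve Φ(·,p) is legendrian (∂_s Φ₂ = −2 Im(conj(Φ₁) ∂_s Φ₁)). Then the Jacobian determinant of Φ (as a map into ℝ³ ≅ ℂ × ℝ) satisfies J_Φ = −Im( conj(∂_s Φ₁) · A ) where A = ∂_{p₁}Φ₂ ∂_{p₂}Φ₁ − ∂_{p₂}Φ₂ ∂_{p₁}Φ₁ + 2 Φ₁ Im( ∂_{p₁}Φ₁ conj(∂_{p₂}Φ₁) ). -/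

import Mathlib

open Set Complex Matrix

/-- `∂_s` of a function on `I × Λ ⊆ ℝ × ℝ²` with values in `ℂ`. -/
noncomputable def pdS (f : ℝ × (ℝ × ℝ) → ℂ) (x : ℝ × (ℝ × ℝ)) : ℂ :=
  deriv (fun s => f (s, x.2)) x.1

/-- `∂_{p₁}`. -/
noncomputable def pd1 (f : ℝ × (ℝ × ℝ) → ℂ) (x : ℝ × (ℝ × ℝ)) : ℂ :=
  deriv (fun t => f (x.1, (t, x.2.2))) x.2.1

/-- `∂_{p₂}`. -/
noncomputable def pd2 (f : ℝ × (ℝ × ℝ) → ℂ) (x : ℝ × (ℝ × ℝ)) : ℂ :=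
  deriv (fun t => f (x.1, (x.2.1, t))) x.2.2

/-- The function `A = ∂_{p₁}Φ₂ ∂_{p₂}Φ₁ − ∂_{p₂}Φ₂ ∂_{p₁}Φ₁ + 2Φ₁ Im(∂_{p₁}Φ₁ conj(∂_{p₂}Φ₁))`. -/
noncomputable def funA (Φ₁ : ℝ × (ℝ × ℝ) → ℂ) (Φ₂ : ℝ × (ℝ × ℝ) → ℝ)
    (x : ℝ × (ℝ × ℝ)) : ℂ :=
  pd1 (fun y => (Φ₂ y : ℂ)) x * pd2 Φ₁ x - pd2 (fun y => (Φ₂ y : ℂ)) x * pd1 Φ₁ x +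
    2 * Φ₁ x * (((pd1 Φ₁ x * (starRingEnd ℂ) (pd2 Φ₁ x)).im : ℝ) : ℂ)


/-! Once `∂_s Φ₂` is replaced by `−2 Im(Φ̄₁ ∂_s Φ₁)`, the identity is a polynomial identity in the
real and imaginary parts of `Φ₁` and its partial derivatives; the only analytic input is that the
partial derivatives of the real-valued `Φ₂` are real. -/

lemma im_deriv_ofReal_comp (f : ℝ → ℝ) (t : ℝ) : (deriv (fun s => (f s : ℂ)) t).im = 0 := by
  by_cases h : DifferentiableAt ℝ (fun s => (f s : ℂ)) t
  · have him : HasDerivAt (fun s => (f s : ℂ).im) (deriv (fun s => (f s : ℂ)) t).im t :=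
      imCLM.hasFDerivAt.comp_hasDerivAt t h.hasDerivAt
    simp only [ofReal_im] at him
    exact him.unique (hasDerivAt_const t 0)
  · simp [deriv_zero_of_not_differentiableAt h]

lemma im_pd1_ofReal (f : ℝ × (ℝ × ℝ) → ℝ) (x : ℝ × (ℝ × ℝ)) :
    (pd1 (fun y => (f y : ℂ)) x).im = 0 :=
  im_deriv_ofReal_comp _ _

lemma im_pd2_ofReal (f : ℝ × (ℝ × ℝ) → ℝ) (x : ℝ × (ℝ × ℝ)) :
    (pd2 (fun y => (f y : ℂ)) x).im = 0 :=
  im_deriv_ofReal_comp _ _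

lemma det_jacobian_of_legendrian {z w₁ w₂ φ s h₁ h₂ : ℂ}
    (hs : s = -2 * ((starRingEnd ℂ φ * z).im : ℂ)) (hh₁ : h₁.im = 0) (hh₂ : h₂.im = 0) :
    det !![z.re, w₁.re, w₂.re; z.im, w₁.im, w₂.im; s.re, h₁.re, h₂.re] =
      -(starRingEnd ℂ z * (h₁ * w₂ - h₂ * w₁ + 2 * φ * ((w₁ * starRingEnd ℂ w₂).im : ℂ))).im := by
  subst hs
  simp only [det_fin_three, of_apply, cons_val', cons_val_zero, cons_val_one, cons_val,
    cons_val_fin_one, mul_re, mul_im, add_re, add_im, sub_re, sub_im, neg_re, conj_re, conj_im,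
    ofReal_re, ofReal_im, re_ofNat, im_ofNat, hh₁, hh₂]
  ring

theorem stmt17_general (a b : ℝ) (Λ : Set (ℝ × ℝ))
    (Φ₁ : ℝ × (ℝ × ℝ) → ℂ) (Φ₂ : ℝ × (ℝ × ℝ) → ℝ)
    (hleg : ∀ x ∈ Set.Ioo a b ×ˢ Λ,
      pdS (fun y => (Φ₂ y : ℂ)) x = -2 * (((starRingEnd ℂ) (Φ₁ x) * pdS Φ₁ x).im : ℝ)) :
    ∀ x ∈ Set.Ioo a b ×ˢ Λ,
      Matrix.det !![(pdS Φ₁ x).re, (pd1 Φ₁ x).re, (pd2 Φ₁ x).re;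
                    (pdS Φ₁ x).im, (pd1 Φ₁ x).im, (pd2 Φ₁ x).im;
                    (pdS (fun y => (Φ₂ y : ℂ)) x).re, (pd1 (fun y => (Φ₂ y : ℂ)) x).re,
                      (pd2 (fun y => (Φ₂ y : ℂ)) x).re]
        = -((starRingEnd ℂ) (pdS Φ₁ x) * funA Φ₁ Φ₂ x).im := fun x hx =>
  det_jacobian_of_legendrian (hleg x hx) (im_pd1_ofReal Φ₂ x) (im_pd2_ofReal Φ₂ x)

/-- If `Φ = (Φ₁, Φ₂) : I × Λ → ℍ` is a C¹ diffeomorphism onto `Ω` whose curves `Φ(·,p)`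
are legendrian, then its Jacobian determinant satisfies `J_Φ = −Im(conj(∂_s Φ₁)·A)`. -/
theorem stmt17 (a b : ℝ) (Λ : Set (ℝ × ℝ)) (hΛ : IsOpen Λ) (Ω : Set (ℂ × ℝ))
    (Φ₁ : ℝ × (ℝ × ℝ) → ℂ) (Φ₂ : ℝ × (ℝ × ℝ) → ℝ)
    (hΦ : ContDiffOn ℝ 1 (fun x => (Φ₁ x, Φ₂ x)) (Set.Ioo a b ×ˢ Λ))
    (hbij : Set.BijOn (fun x => (Φ₁ x, Φ₂ x)) (Set.Ioo a b ×ˢ Λ) Ω)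
    (hleg : ∀ x ∈ Set.Ioo a b ×ˢ Λ,
      pdS (fun y => (Φ₂ y : ℂ)) x = -2 * (((starRingEnd ℂ) (Φ₁ x) * pdS Φ₁ x).im : ℝ)) :
    ∀ x ∈ Set.Ioo a b ×ˢ Λ,
      Matrix.det !![(pdS Φ₁ x).re, (pd1 Φ₁ x).re, (pd2 Φ₁ x).re;
                    (pdS Φ₁ x).im, (pd1 Φ₁ x).im, (pd2 Φ₁ x).im;
                    (pdS (fun y => (Φ₂ y : ℂ)) x).re, (pd1 (fun y => (Φ₂ y : ℂ)) x).re,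
                      (pd2 (fun y => (Φ₂ y : ℂ)) x).re]
        = -((starRingEnd ℂ) (pdS Φ₁ x) * funA Φ₁ Φ₂ x).im :=
  stmt17_general a b Λ Φ₁ Φ₂ hleg
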